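/- arXiv:1607.04443 — 2 statements merged into one kernel-verified Lean document; each statement's English description precedes it below -/
import Mathlib

section
/- Let β > 0 and let u : [0, ∞) → ℝ be differentiable with u(0) = 1 and u'(t) ≥ P_β(u(t)) for every t ≥ 0. Then u(t) ≥ α₋(β) for every t ≥ 0, where α₋(β) is the smaller root of P_β. -/
open Set

/-!
Write `a = 5/6 + 2/(3β²)`, so that `P_β(x) = 3β² ((a - x)² - (a² - a + 1/6))` and `P_β > 0` strictly
below `α₋ = a - √(a² - a + 1/6)`. For any level `c < α₋` we have `c < 1 = u 0`, and wherever `u`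
touches `c` its derivative is at least `P_β(c) > 0`, so `u` can never cross below `c`.
Letting `c ↑ α₋` gives `α₋ ≤ u`.
-/

theorem le_image_of_deriv_pos_at_level {u : ℝ → ℝ} {a c : ℝ}
    (hdiff : ∀ t, a ≤ t → DifferentiableAt ℝ u t) (hc : c ≤ u a)
    (hpos : ∀ t, a ≤ t → u t = c → 0 < deriv u t) :
    ∀ t, a ≤ t → c ≤ u t := by
  intro t ht
  have hcont : ContinuousOn (fun x => -u x) (Icc a t) :=
    fun x hx => (hdiff x hx.1).continuousAt.neg.continuousWithinAt
  have hderiv : ∀ x ∈ Ico a t, HasDerivWithinAt (fun x => -u x) (-deriv u x) (Ici x) x :=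
    fun x hx => (hdiff x hx.1).hasDerivAt.neg.hasDerivWithinAt
  have := image_le_of_deriv_right_lt_deriv_boundary' hcont hderiv (B := fun _ => -c) (B' := 0)
    (neg_le_neg hc) continuousOn_const (fun _ _ => hasDerivWithinAt_const _ _ _)
    (fun x hx hx_eq => by simpa using hpos x hx.1 (neg_inj.mp hx_eq)) ⟨ht, le_rfl⟩
  exact neg_le_neg_iff.mp this

theorem sub_sqrt_lt_one {a : ℝ} (ha : 5 / 6 < a) : a - √(a ^ 2 - a + 1 / 6) < 1 := by
  rcases lt_or_ge a 1 with h | h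
  · linarith [Real.sqrt_nonneg (a ^ 2 - a + 1 / 6)]
  · have : a - 1 < √(a ^ 2 - a + 1 / 6) := (Real.lt_sqrt (by linarith)).mpr (by nlinarith)
    linarith

theorem lt_sq_sub_of_lt_sub_sqrt {a D x : ℝ} (hx : x < a - √D) : D < (a - x) ^ 2 :=
  (Real.sqrt_lt' (by linarith [Real.sqrt_nonneg D])).mp (by linarith)

theorem quadratic_eq_of_center {β a : ℝ} (ha : 3 * β ^ 2 * a = 5 / 2 * β ^ 2 + 2) (x : ℝ) :
    3 * β ^ 2 * x ^ 2 - (5 * β ^ 2 + 4) * x + 2 * (1 + β ^ 2) =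
      3 * β ^ 2 * ((a - x) ^ 2 - (a ^ 2 - a + 1 / 6)) := by
  linear_combination (2 * x - 1) * ha

theorem quadratic_pos_of_lt_smaller_root {β a x : ℝ} (hβ : β ≠ 0)
    (ha : 3 * β ^ 2 * a = 5 / 2 * β ^ 2 + 2) (hx : x < a - √(a ^ 2 - a + 1 / 6)) :
    0 < 3 * β ^ 2 * x ^ 2 - (5 * β ^ 2 + 4) * x + 2 * (1 + β ^ 2) := by
  rw [quadratic_eq_of_center ha]
  exact mul_pos (by positivity) (sub_pos.mpr (lt_sq_sub_of_lt_sub_sqrt hx))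

/-- Let `β > 0` and let `u : [0, ∞) → ℝ` be differentiable with `u 0 = 1` and
`u'(t) ≥ P_β(u(t))` for every `t ≥ 0`. Then `u(t) ≥ α₋(β)` for every `t ≥ 0`,
where `α₋(β) = a − √(a² − a + 1/6)`, `a = 5/6 + 2/(3β²)`, is the smaller root
of `P_β`. -/
theorem stmt_8 (β : ℝ) (hβ : 0 < β) (u : ℝ → ℝ)
    (hdiff : ∀ t, 0 ≤ t → DifferentiableAt ℝ u t)
    (hu0 : u 0 = 1)
    (hderiv : ∀ t, 0 ≤ t →
      3 * β ^ 2 * (u t) ^ 2 - (5 * β ^ 2 + 4) * u t + 2 * (1 + β ^ 2) ≤ deriv u t) :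
    ∀ t, 0 ≤ t →
      (5 / 6 + 2 / (3 * β ^ 2)) -
        Real.sqrt ((5 / 6 + 2 / (3 * β ^ 2)) ^ 2 - (5 / 6 + 2 / (3 * β ^ 2)) + 1 / 6) ≤ u t := by
  set a : ℝ := 5 / 6 + 2 / (3 * β ^ 2) with ha_def
  have ha : 3 * β ^ 2 * a = 5 / 2 * β ^ 2 + 2 := by
    rw [ha_def]; field_simp; ring
  have ha_gt : 5 / 6 < a := by
    rw [ha_def]; linarith [show 0 < 2 / (3 * β ^ 2) by positivity]
  intro t ht
  refine le_of_forall_lt_imp_le_of_dense fun c hc => ?_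
  refine le_image_of_deriv_pos_at_level hdiff ?_ (fun s hs hus => ?_) t ht
  · rw [hu0]; linarith [sub_sqrt_lt_one ha_gt]
  · exact (quadratic_pos_of_lt_smaller_root hβ.ne' ha (hus ▸ hc)).trans_le (hderiv s hs)
end

section
/- Let β > 0 and let u : [0, ∞) → ℝ be differentiable with 0 ≤ u(t) ≤ 1 for all t, u(0) = 1, u'(t) ≥ P_β(u(t)) for all t ≥ 0, and u'(t) ≤ −λ(β)(u(t) − α₋(β)) for all t ≥ 0. Then lim_{t → ∞} u(t) = α₋(β). (This is the deterministic core of Theorem 1: applied to u(t) = E[I_t], the mean overlap of the two-point directed polymer, it yields lim_{t→∞} E[I_t] = α₋(β) and hence the free energy p(β) = −(β²/2)·α₋(β).) -/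
/-!
Since `α₋(β)` is the smaller root of `P_β`, we have `P_β > 0` below `α₋(β)`, so the lower bound
`u' ≥ P_β(u)` prevents `u` from ever dropping below `α₋(β) < 1 = u 0`. The upper bound then makes
`(u t - α₋(β)) e^{λ(β) t}` nonincreasing, which squeezes `u t` between `α₋(β)` and
`α₋(β) + (1 - α₋(β)) e^{-λ(β) t}`.
-/

open Filter Set Real

theorem le_of_deriv_pos_of_lt {u : ℝ → ℝ} {a b c : ℝ}
    (hu : ∀ x ∈ Icc a b, DifferentiableAt ℝ u x) (ha : c ≤ u a)
    (hpos : ∀ x ∈ Ico a b, u x < c → 0 < deriv u x) : ∀ x ∈ Icc a b, c ≤ u x := by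
  intro x hx
  -- Fence `-u` by the constant `ε - c`: wherever they meet, `u < c`, so `-u` strictly decreases.
  refine le_of_forall_pos_le_add fun ε hε => ?_
  have key := image_le_of_deriv_right_lt_deriv_boundary' (f := fun y => -u y)
    (f' := fun y => -deriv u y) (B := fun _ => ε - c) (B' := fun _ => 0)
    (fun y hy => (hu y hy).continuousAt.neg.continuousWithinAt)
    (fun y hy => (hu y (Ico_subset_Icc_self hy)).hasDerivAt.neg.hasDerivWithinAt)
    (by linarith) continuousOn_const (fun _ _ => hasDerivWithinAt_const _ _ _)
    (fun y hy hyc => neg_neg_of_pos (hpos y hy (by linarith))) hx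
  linarith

theorem sub_le_mul_exp_of_deriv_le {u : ℝ → ℝ} {c L : ℝ}
    (hu : ∀ t, 0 ≤ t → DifferentiableAt ℝ u t)
    (hderiv : ∀ t, 0 ≤ t → deriv u t ≤ -L * (u t - c)) :
    ∀ t, 0 ≤ t → u t - c ≤ (u 0 - c) * exp (-L * t) := by
  set v : ℝ → ℝ := fun t => (u t - c) * exp (L * t)
  have hv : ∀ t, 0 ≤ t →
      HasDerivAt v (exp (L * t) * (deriv u t + L * (u t - c))) t := fun t ht =>
    (((hu t ht).hasDerivAt.sub_const c).mul ((hasDerivAt_id' t).const_mul L).exp).congr_deriv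
      (by ring)
  have hanti : AntitoneOn v (Ici 0) := by
    refine antitoneOn_of_deriv_nonpos (convex_Ici 0)
      (fun t ht => (hv t ht).continuousAt.continuousWithinAt)
      (fun t ht => (hv t (interior_subset ht)).differentiableAt.differentiableWithinAt)
      fun t ht => ?_
    rw [(hv t (interior_subset ht)).deriv]
    exact mul_nonpos_of_nonneg_of_nonpos (exp_pos _).le
      (by linarith [hderiv t (interior_subset ht)])
  intro t ht
  have hvt : v t ≤ v 0 := hanti self_mem_Ici ht ht
  simp only [v, mul_zero, exp_zero, mul_one] at hvt
  calc u t - c = (u t - c) * exp (L * t) * exp (-L * t) := by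
        rw [mul_assoc, ← exp_add, show L * t + -L * t = 0 by ring, exp_zero, mul_one]
    _ ≤ (u 0 - c) * exp (-L * t) := by gcongr

theorem tendsto_of_le_of_deriv_le_neg_mul {u : ℝ → ℝ} {c L : ℝ} (hL : 0 < L)
    (hu : ∀ t, 0 ≤ t → DifferentiableAt ℝ u t) (hc : ∀ t, 0 ≤ t → c ≤ u t)
    (hderiv : ∀ t, 0 ≤ t → deriv u t ≤ -L * (u t - c)) :
    Tendsto u atTop (nhds c) := by
  have hdecay : Tendsto (fun t => c + (u 0 - c) * exp (-L * t)) atTop (nhds c) := by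
    simpa using ((tendsto_exp_atBot.comp
      (tendsto_id.const_mul_atTop_of_neg (neg_lt_zero.mpr hL))).const_mul (u 0 - c)).const_add c
  refine tendsto_of_tendsto_of_tendsto_of_le_of_le' tendsto_const_nhds hdecay ?_ ?_
  · filter_upwards [eventually_ge_atTop 0] with t ht using hc t ht
  · filter_upwards [eventually_ge_atTop 0] with t ht
    linarith [sub_le_mul_exp_of_deriv_le hu hderiv t ht]

namespace TwoPointPolymer

noncomputable def P (β x : ℝ) : ℝ := 3 * β ^ 2 * x ^ 2 - (5 * β ^ 2 + 4) * x + 2 * (1 + β ^ 2)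

-- The `a` of the paper; the roots of `P β` are `rootMid β ± rootGap β`.
noncomputable def rootMid (β : ℝ) : ℝ := 5 / 6 + 2 / (3 * β ^ 2)

noncomputable def rootGap (β : ℝ) : ℝ := √(rootMid β ^ 2 - rootMid β + 1 / 6)

noncomputable def alphaMinus (β : ℝ) : ℝ := rootMid β - rootGap β

noncomputable def decayRate (β : ℝ) : ℝ := (5 * β ^ 2 + 4) - 3 * β ^ 2 * (1 + alphaMinus β)

variable {β : ℝ}

theorem three_mul_sq_mul_rootMid (hβ : 0 < β) : 3 * β ^ 2 * rootMid β = 5 * β ^ 2 / 2 + 2 := by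
  unfold rootMid
  field_simp
  ring

theorem sq_rootMid_sub_one_lt (hβ : 0 < β) :
    (rootMid β - 1) ^ 2 < rootMid β ^ 2 - rootMid β + 1 / 6 := by
  have hmid : 5 / 6 < rootMid β := lt_add_of_pos_right _ (by positivity)
  linarith [show (rootMid β - 1) ^ 2 = rootMid β ^ 2 - 2 * rootMid β + 1 by ring]

theorem abs_rootMid_sub_one_lt_rootGap (hβ : 0 < β) : |rootMid β - 1| < rootGap β :=
  (lt_sqrt (abs_nonneg _)).mpr (by rw [sq_abs]; exact sq_rootMid_sub_one_lt hβ)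

theorem rootGap_sq (hβ : 0 < β) : rootGap β ^ 2 = rootMid β ^ 2 - rootMid β + 1 / 6 :=
  sq_sqrt ((sq_nonneg _).trans (sq_rootMid_sub_one_lt hβ).le)

theorem P_eq_mul (hβ : 0 < β) (x : ℝ) :
    P β x = 3 * β ^ 2 * ((alphaMinus β - x) * (rootMid β + rootGap β - x)) := by
  unfold P alphaMinus
  linear_combination (2 * x - 1) * three_mul_sq_mul_rootMid hβ + 3 * β ^ 2 * rootGap_sq hβ

theorem P_pos_of_lt_alphaMinus (hβ : 0 < β) {x : ℝ} (hx : x < alphaMinus β) : 0 < P β x := by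
  have hgap : 0 ≤ rootGap β := sqrt_nonneg _
  rw [P_eq_mul hβ]
  unfold alphaMinus at hx ⊢
  have hplus : 0 < rootMid β + rootGap β - x := by linarith
  have hminus : 0 < rootMid β - rootGap β - x := by linarith
  positivity

theorem alphaMinus_lt_one (hβ : 0 < β) : alphaMinus β < 1 := by
  have hgap := abs_rootMid_sub_one_lt_rootGap hβ
  unfold alphaMinus
  linarith [le_abs_self (rootMid β - 1)]

theorem decayRate_pos (hβ : 0 < β) : 0 < decayRate β := by
  have hrate : decayRate β = 3 * β ^ 2 * (rootMid β - 1 + rootGap β) := by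
    unfold decayRate alphaMinus
    linear_combination (-2 : ℝ) * three_mul_sq_mul_rootMid hβ
  have hgap := abs_rootMid_sub_one_lt_rootGap hβ
  have hpos : 0 < rootMid β - 1 + rootGap β := by linarith [neg_abs_le (rootMid β - 1)]
  rw [hrate]
  positivity

end TwoPointPolymer

open TwoPointPolymer

theorem stmt_10_general (β : ℝ) (hβ : 0 < β) (u : ℝ → ℝ)
    (hdiff : ∀ t, 0 ≤ t → DifferentiableAt ℝ u t)
    (hu0 : u 0 = 1)
    (hlower : ∀ t, 0 ≤ t →
      3 * β ^ 2 * (u t) ^ 2 - (5 * β ^ 2 + 4) * u t + 2 * (1 + β ^ 2) ≤ deriv u t)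
    (hupper : ∀ t, 0 ≤ t →
      deriv u t ≤
        -((5 * β ^ 2 + 4) - 3 * β ^ 2 *
            (1 + ((5 / 6 + 2 / (3 * β ^ 2)) -
              Real.sqrt ((5 / 6 + 2 / (3 * β ^ 2)) ^ 2 - (5 / 6 + 2 / (3 * β ^ 2)) + 1 / 6)))) *
          (u t - ((5 / 6 + 2 / (3 * β ^ 2)) -
            Real.sqrt ((5 / 6 + 2 / (3 * β ^ 2)) ^ 2 - (5 / 6 + 2 / (3 * β ^ 2)) + 1 / 6)))) :
    Tendsto u atTop
      (nhds ((5 / 6 + 2 / (3 * β ^ 2)) -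
        Real.sqrt ((5 / 6 + 2 / (3 * β ^ 2)) ^ 2 - (5 / 6 + 2 / (3 * β ^ 2)) + 1 / 6))) := by
  have hstart : alphaMinus β ≤ u 0 := by
    rw [hu0]
    exact (alphaMinus_lt_one hβ).le
  have hge : ∀ t, 0 ≤ t → alphaMinus β ≤ u t := fun t ht =>
    le_of_deriv_pos_of_lt (fun x hx => hdiff x hx.1) hstart
      (fun x hx hlt => (P_pos_of_lt_alphaMinus hβ hlt).trans_le (hlower x hx.1)) t ⟨ht, le_rfl⟩
  exact tendsto_of_le_of_deriv_le_neg_mul (decayRate_pos hβ) hdiff hge hupper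

/-- Deterministic core of Theorem 1: for `β > 0`, if `u : [0, ∞) → ℝ` is
differentiable with `0 ≤ u t ≤ 1`, `u 0 = 1`, `u'(t) ≥ P_β(u(t))` and
`u'(t) ≤ −λ(β)(u(t) − α₋(β))` for all `t ≥ 0`, then `u t → α₋(β)` as `t → ∞`,
where `α₋(β) = a − √(a² − a + 1/6)`, `a = 5/6 + 2/(3β²)`, and
`λ(β) = (5β² + 4) − 3β²(1 + α₋(β))`. -/
theorem stmt_10 (β : ℝ) (hβ : 0 < β) (u : ℝ → ℝ)
    (hdiff : ∀ t, 0 ≤ t → DifferentiableAt ℝ u t)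
    (hbdd : ∀ t, 0 ≤ t → 0 ≤ u t ∧ u t ≤ 1)
    (hu0 : u 0 = 1)
    (hlower : ∀ t, 0 ≤ t →
      3 * β ^ 2 * (u t) ^ 2 - (5 * β ^ 2 + 4) * u t + 2 * (1 + β ^ 2) ≤ deriv u t)
    (hupper : ∀ t, 0 ≤ t →
      deriv u t ≤
        -((5 * β ^ 2 + 4) - 3 * β ^ 2 *
            (1 + ((5 / 6 + 2 / (3 * β ^ 2)) -
              Real.sqrt ((5 / 6 + 2 / (3 * β ^ 2)) ^ 2 - (5 / 6 + 2 / (3 * β ^ 2)) + 1 / 6)))) *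
          (u t - ((5 / 6 + 2 / (3 * β ^ 2)) -
            Real.sqrt ((5 / 6 + 2 / (3 * β ^ 2)) ^ 2 - (5 / 6 + 2 / (3 * β ^ 2)) + 1 / 6)))) :
    Tendsto u atTop
      (nhds ((5 / 6 + 2 / (3 * β ^ 2)) -
        Real.sqrt ((5 / 6 + 2 / (3 * β ^ 2)) ^ 2 - (5 / 6 + 2 / (3 * β ^ 2)) + 1 / 6))) :=
  stmt_10_general β hβ u hdiff hu0 hlower hupper
end
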